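/- arXiv:1908.09821 — 3 statements merged into one kernel-verified Lean document; each statement's English description precedes it below -/
import Mathlib

section
/- Let λ be a weak composition of n, w ∈ S_n with R(w) row-strict, and V_• = g_n g_{n−1}⋯g_2 wE_• with g_k ∈ B_k(w), so V_• has basis vectors v_r = g_n⋯g_2 e_{w(r)}. If ℓ labels a box of R(w) with r = r_ℓ the box directly to its right, then v_ℓ = X_λ v_r + Σ_{(t,ℓ) ∈ inv_λ(w), ℓ < t ≤ n} x_{w(t)w(ℓ)} v_t, where x_{w(t)w(ℓ)} are the coordinates of g_t. Consequently V_• lies in the Springer fiber of X_λ (i.e., X_λ(V_r) ⊆ V_{r−1} for all r). -/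
open Matrix

attribute [local instance] Classical.propDecidable

noncomputable section

/-- Label of the box in row `i` (0-indexed from the top), column `j` (0-indexed) of the base
filling of the weak composition `lam`: columns filled left to right, each column bottom to top,
labels `1,…,n`. -/
def baseLabel (lam : List ℕ) (i j : ℕ) : ℕ :=
  (∑ i' ∈ Finset.range lam.length, min (lam.getD i' 0) j) +
    ((Finset.Ico i lam.length).filter (fun i' => j < lam.getD i' 0)).card

def IsBox (lam : List ℕ) (i j : ℕ) : Prop :=
  i < lam.length ∧ j < lam.getD i 0

/-- The nilpotent matrix `X_λ = Σ E_{ℓ r}` over pairs where the box labeled `r` is directly right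
of the box labeled `ℓ` in the base filling (labels are 1-indexed; matrix indices 0-indexed). -/
def Xlam (n : ℕ) (lam : List ℕ) : Matrix (Fin n) (Fin n) ℂ :=
  fun ℓ r => if (∃ i j, IsBox lam i (j+1) ∧ baseLabel lam i j = (ℓ : ℕ) + 1 ∧
      baseLabel lam i (j+1) = (r : ℕ) + 1) then 1 else 0

def IsFullFlag (n : ℕ) (V : ℕ → Submodule ℂ (Fin n → ℂ)) : Prop :=
  V 0 = ⊥ ∧ (∀ i, V i ≤ V (i+1)) ∧ ∀ i, i ≤ n → Module.finrank ℂ (V i) = i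

def InHess (n : ℕ) (X : Matrix (Fin n) (Fin n) ℂ) (h : ℕ → ℕ)
    (V : ℕ → Submodule ℂ (Fin n → ℂ)) : Prop :=
  ∀ i, i ≤ n → ∀ v ∈ V i, X.mulVec v ∈ V (h i)

/-- The flag `wE_•`, whose `k`-th space is spanned by `e_{w(1)},…,e_{w(k)}` (0-indexed). -/
def permFlag (n : ℕ) (w : Equiv.Perm (Fin n)) : ℕ → Submodule ℂ (Fin n → ℂ) :=
  fun k => Submodule.span ℂ {v | ∃ j : Fin n, (j : ℕ) < k ∧ v = Pi.single (w j) (1 : ℂ)}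

/-- The flag whose `k`-th space is spanned by the first `k` columns of `g`. -/
def matFlag (n : ℕ) (g : Matrix (Fin n) (Fin n) ℂ) : ℕ → Submodule ℂ (Fin n → ℂ) :=
  fun k => Submodule.span ℂ {c | ∃ j : Fin n, (j : ℕ) < k ∧ c = fun a => g a j}

def permMat (n : ℕ) (σ : Equiv.Perm (Fin n)) : Matrix (Fin n) (Fin n) ℂ :=
  fun a b => if σ b = a then 1 else 0

def invSet (n : ℕ) (w : Equiv.Perm (Fin n)) : Finset (Fin n × Fin n) :=
  Finset.univ.filter (fun p => p.2 < p.1 ∧ w p.1 < w p.2)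

def blen (n : ℕ) (w : Equiv.Perm (Fin n)) : ℕ := (invSet n w).card

open Fin.NatCast in
/-- `v = s_i s_{i+1} ⋯ s_{n-1}` (0-indexed simple transpositions `swap j (j+1)`). -/
def vPerm (n : ℕ) (i : ℕ) : Equiv.Perm (Fin (n+1)) :=
  ((List.Ico i n).map (fun j : ℕ => Equiv.swap (j : Fin (n+1)) ((j+1 : ℕ) : Fin (n+1)))).prod

/-- `R(w)` is row-strict: the entry in the box labeled `m` of the base filling is `w⁻¹(m)`,
so entry `p` (0-indexed) occupies the box whose base label is `w(p)+1`. -/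
def RowStrictT (n : ℕ) (lam : List ℕ) (w : Equiv.Perm (Fin n)) : Prop :=
  ∀ i j, IsBox lam i (j+1) → ∀ p q : Fin n,
    (w p : ℕ) + 1 = baseLabel lam i j → (w q : ℕ) + 1 = baseLabel lam i (j+1) → p < q

def HStrictT (n : ℕ) (lam : List ℕ) (h : ℕ → ℕ) (w : Equiv.Perm (Fin n)) : Prop :=
  ∀ i j, IsBox lam i (j+1) → ∀ p q : Fin n,
    (w p : ℕ) + 1 = baseLabel lam i j → (w q : ℕ) + 1 = baseLabel lam i (j+1) →
      (p : ℕ) + 1 ≤ h ((q : ℕ) + 1)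

/-- `(k,ℓ)` is a Hessenberg inversion of `R(w)` (entries 0-indexed: values are index+1). -/
def HessInvT (n : ℕ) (lam : List ℕ) (h : ℕ → ℕ) (w : Equiv.Perm (Fin n)) (k ℓ : Fin n) : Prop :=
  ℓ < k ∧ ∃ ik jk il jl : ℕ, IsBox lam ik jk ∧ IsBox lam il jl ∧
    baseLabel lam ik jk = (w k : ℕ) + 1 ∧ baseLabel lam il jl = (w ℓ : ℕ) + 1 ∧
    (jk < jl ∨ (jk = jl ∧ il < ik)) ∧
    (∀ r : Fin n, IsBox lam il (jl + 1) → (w r : ℕ) + 1 = baseLabel lam il (jl + 1) →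
      (k : ℕ) + 1 ≤ h ((r : ℕ) + 1))

/-- Springer inversions: Hessenberg inversions for `h = (0,1,…,n-1)`, i.e. `h(i) = i - 1`. -/
def SpringerInvT (n : ℕ) (lam : List ℕ) (w : Equiv.Perm (Fin n)) (k ℓ : Fin n) : Prop :=
  HessInvT n lam (fun m => m - 1) w k ℓ

/-- The box labeled `b+1` is directly right of the box labeled `a+1` in the base filling. -/
def RightNbr (lam : List ℕ) (a b : ℕ) : Prop :=
  ∃ i j, IsBox lam i (j+1) ∧ baseLabel lam i j = a + 1 ∧ baseLabel lam i (j+1) = b + 1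

/-- The box labeled `a+1` is at the end of its row in the base filling. -/
def EndOfRow (lam : List ℕ) (a : ℕ) : Prop :=
  ∃ i j, IsBox lam i j ∧ ¬ IsBox lam i (j+1) ∧ baseLabel lam i j = a + 1

def IsUpperUnip (n : ℕ) (g : Matrix (Fin n) (Fin n) ℂ) : Prop :=
  (∀ i, g i i = 1) ∧ ∀ i j : Fin n, j < i → g i j = 0

/-- `U_i`: upper unipotent matrices whose off-diagonal entries are supported in row `i`. -/
def InUi (n : ℕ) (i : Fin n) (g : Matrix (Fin n) (Fin n) ℂ) : Prop :=
  IsUpperUnip n g ∧ ∀ a b : Fin n, a ≠ b → g a b ≠ 0 → a = i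

/-- `U_0`: upper unipotent matrices of `GL_n` embedded in `GL_{n+1}` (last column trivial). -/
def InU0 (n : ℕ) (g : Matrix (Fin (n+1)) (Fin (n+1)) ℂ) : Prop :=
  IsUpperUnip (n+1) g ∧ ∀ a : Fin (n+1), a ≠ Fin.last n → g a (Fin.last n) = 0

/-- The element of `B_k(w)` with coordinates `x`: it sends `e_{w(j)} = X_λ^m e_{w(ℓ)}` to
`e_{w(j)} + x ℓ • X_λ^m e_{w(k)}` for Springer inversions `(k,ℓ)`, fixing all other `e_{w(j)}`. -/
def BkMat (n : ℕ) (lam : List ℕ) (w : Equiv.Perm (Fin n)) (k : Fin n) (x : Fin n → ℂ) :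
    Matrix (Fin n) (Fin n) ℂ :=
  1 + ∑ ℓ : Fin n, if SpringerInvT n lam w k ℓ then
      x ℓ • (∑ m ∈ Finset.range n,
        (Xlam n lam) ^ m * Matrix.single (w k) (w ℓ) (1 : ℂ) * ((Xlam n lam)ᵀ) ^ m)
    else 0

/-- The product `g_n g_{n-1} ⋯ g_2` of elements `g_k ∈ B_k(w)` with coordinates `x k`. -/
def bigB (n : ℕ) (lam : List ℕ) (w : Equiv.Perm (Fin n)) (x : Fin n → Fin n → ℂ) :
    Matrix (Fin n) (Fin n) ℂ :=
  ((List.ofFn (fun k : Fin n => BkMat n lam w k (x k))).reverse).prod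

/- Abstract fillings `T : row → column → value` of the diagram of `lam`, values in `[1, n]`. -/

def RowStrictF (lam : List ℕ) (T : ℕ → ℕ → ℕ) : Prop :=
  ∀ i j, IsBox lam i (j+1) → T i j < T i (j+1)

def HStrictF (lam : List ℕ) (h : ℕ → ℕ) (T : ℕ → ℕ → ℕ) : Prop :=
  ∀ i j, IsBox lam i (j+1) → T i j ≤ h (T i (j+1))

def GoodFilling (lam : List ℕ) (T : ℕ → ℕ → ℕ) : Prop :=
  (∀ i j, IsBox lam i j → 1 ≤ T i j ∧ T i j ≤ lam.sum) ∧
  (∀ m, 1 ≤ m → m ≤ lam.sum → ∃ i j, IsBox lam i j ∧ T i j = m) ∧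
  (∀ i j i' j', IsBox lam i j → IsBox lam i' j' → T i j = T i' j' → i = i' ∧ j = j')

def HessInvF (lam : List ℕ) (h : ℕ → ℕ) (T : ℕ → ℕ → ℕ) (k ℓ : ℕ) : Prop :=
  ℓ < k ∧ ∃ ik jk il jl : ℕ, IsBox lam ik jk ∧ IsBox lam il jl ∧
    T ik jk = k ∧ T il jl = ℓ ∧
    (jk < jl ∨ (jk = jl ∧ il < ik)) ∧
    (IsBox lam il (jl + 1) → k ≤ h (T il (jl + 1)))

/-- `S` is obtained from `T` by sorting each column increasingly from top to bottom:
same column entries (as sets, entries being distinct), with columns of `S` increasing. -/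
def ColSortedOf (lam : List ℕ) (T S : ℕ → ℕ → ℕ) : Prop :=
  (∀ j m, (∃ i, IsBox lam i j ∧ T i j = m) ↔ (∃ i, IsBox lam i j ∧ S i j = m)) ∧
  (∀ i j, IsBox lam i j → IsBox lam (i+1) j → S i j < S (i+1) j)

def IsPartitionL (lam : List ℕ) : Prop :=
  ∀ i i', i ≤ i' → lam.getD i' 0 ≤ lam.getD i 0

def hessInvCount (lam : List ℕ) (h : ℕ → ℕ) (T : ℕ → ℕ → ℕ) : ℕ :=
  (((Finset.range (lam.sum + 1)) ×ˢ (Finset.range (lam.sum + 1))).filter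
    (fun p => HessInvF lam h T p.1 p.2)).card

def Hspace (n : ℕ) (h : ℕ → ℕ) : Submodule ℂ (Matrix (Fin n) (Fin n) ℂ) :=
  Submodule.span ℂ
    {A | ∃ i j : Fin n, (i : ℕ) + 1 ≤ h ((j : ℕ) + 1) ∧ A = Matrix.single i j (1 : ℂ)}

/-- Left-nested iterated bracket `[f (m), [f (m-1), [⋯ [f 1, f 0]]]]`. -/
def iterBr (n : ℕ) (f : ℕ → Matrix (Fin n) (Fin n) ℂ) : ℕ → Matrix (Fin n) (Fin n) ℂ
  | 0 => f 0
  | (m+1) => f (m+1) * iterBr n f m - iterBr n f m * f (m+1)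


/-!
Write `X = X_λ`, `B = g_n ⋯ g_2`, and `A = Σ x_{tℓ} E_{w(t) w(ℓ)}` over the Springer inversions,
with `A_k` its `k`-th summand in `t`. The whole theorem comes from the identity `X B = B (1 - A) X`.

The sum `Σ_m X^m E_{w(k) w(ℓ)} (Xᵀ)^m` defining `g_k` telescopes against `X` because `w(k)` lies
weakly left of `w(ℓ)`, and `X` is nilpotent, so `g_k X = X g_k + A_k X`. In `P_k = g_{k-1} ⋯ g_1`
the rows of `w(s)` with `s ≥ k` are untouched, while `X` sends the row of `w(ℓ)` to that of
`w(r_ℓ)` with `r_ℓ > k`, so `A_k X P_k = A_k X`; and `P_{k+1}` fixes `e_{w(k)}`, so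
`P_{k+1} A_k = A_k`. Induction on `k` gives `X P_k = P_k (1 - Σ_{t<k} A_t) X`.

Applied to `e_{w(r)}`, with `X e_{w(r)} = e_{w(ℓ)}`, the identity is the formula for `v_ℓ`.
Row-strictness and `t < r_ℓ` make `(1 - A) X` strictly upper triangular in the basis
`e_{w(1)}, …, e_{w(n)}`, so `X` maps `B (wE_i)` into `B (wE_{i-1})`.
-/

namespace Matrix

variable {ι R : Type*} [Fintype ι] [DecidableEq ι]

section Semiring

variable [Semiring R] {M : Matrix ι ι R} (f : ι → ℕ)

lemma add_le_of_pow_apply_ne_zero (hM : ∀ a b, M a b ≠ 0 → f a < f b) (m : ℕ) {a b : ι}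
    (h : (M ^ m) a b ≠ 0) : f a + m ≤ f b := by
  induction m generalizing b with
  | zero =>
    obtain rfl : a = b := by by_contra hab; exact h (by simp [one_apply_ne hab])
    simp
  | succ m ih =>
    rw [pow_succ, mul_apply] at h
    obtain ⟨c, -, hc⟩ := Finset.exists_ne_zero_of_sum_ne_zero h
    have := ih (left_ne_zero_of_mul hc)
    have := hM c b (right_ne_zero_of_mul hc)
    omega

lemma eq_add_of_pow_apply_ne_zero (hM : ∀ a b, M a b ≠ 0 → f b = f a + 1) (m : ℕ) {a b : ι}
    (h : (M ^ m) a b ≠ 0) : f b = f a + m := by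
  induction m generalizing b with
  | zero =>
    obtain rfl : a = b := by by_contra hab; exact h (by simp [one_apply_ne hab])
    simp
  | succ m ih =>
    rw [pow_succ, mul_apply] at h
    obtain ⟨c, -, hc⟩ := Finset.exists_ne_zero_of_sum_ne_zero h
    rw [hM c b (right_ne_zero_of_mul hc), ih (left_ne_zero_of_mul hc)]
    rfl

lemma pow_card_eq_zero_of_apply_ne_zero_lt {n : ℕ} {M : Matrix (Fin n) (Fin n) R}
    (hM : ∀ a b, M a b ≠ 0 → a < b) : M ^ n = 0 := by
  ext a b
  by_contra h
  have := add_le_of_pow_apply_ne_zero (fun a : Fin n => (a : ℕ)) hM n h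
  omega

lemma mul_single_mul_apply (A B : Matrix ι ι R) (a b c e : ι) (r : R) :
    (A * single a b r * B) c e = A c a * r * B b e := by
  rw [Matrix.mul_assoc, mul_apply, Finset.sum_eq_single a, single_mul_apply_same, mul_assoc]
  · intro d _ hd
    rw [single_mul_apply_of_ne _ _ _ _ _ hd, mul_zero]
  · simp

lemma single_mul_eq_single_mul {M N : Matrix ι ι R} {b : ι} (h : ∀ e, M b e = N b e) (a : ι)
    (r : R) : single a b r * M = single a b r * N := by
  ext c e
  by_cases hc : c = a
  · rw [hc, single_mul_apply_same, single_mul_apply_same, h]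
  · rw [single_mul_apply_of_ne _ _ _ _ _ hc, single_mul_apply_of_ne _ _ _ _ _ hc]

lemma mul_single_eq_single {M : Matrix ι ι R} {a : ι} (h : ∀ c, M c a = (1 : Matrix ι ι R) c a)
    (b : ι) (r : R) : M * single a b r = single a b r := by
  ext c e
  by_cases he : e = b
  · rw [he, mul_single_apply_same, h, single_apply]
    by_cases hc : c = a
    · subst hc; simp
    · simp [one_apply_ne hc, Ne.symm hc]
  · rw [mul_single_apply_of_ne (hbj := he)]
    simp [Ne.symm he]

end Semiring

lemma mulVec_single_one_eq_sum {R : Type*} [CommSemiring R] (N : Matrix ι ι R) (w : Equiv.Perm ι)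
    (j : ι) : N *ᵥ Pi.single j 1 = ∑ s, N (w s) j • Pi.single (w s) 1 := by
  ext a
  simp [Finset.sum_apply, Pi.single_apply, eq_comm (a := a),
    ← Equiv.eq_symm_apply]

end Matrix

lemma Fin.sum_ite_val_lt_succ {M : Type*} [AddCommMonoid M] {n k : ℕ} (hk : k < n)
    (f : Fin n → M) :
    ∑ t : Fin n, (if (t : ℕ) < k + 1 then f t else 0) =
      ∑ t : Fin n, (if (t : ℕ) < k then f t else 0) + f ⟨k, hk⟩ := by
  have hf : f ⟨k, hk⟩ = ∑ t : Fin n, if t = ⟨k, hk⟩ then f t else 0 := by simp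
  rw [hf, ← Finset.sum_add_distrib]
  refine Finset.sum_congr rfl fun t _ => ?_
  split_ifs <;> simp_all [Fin.ext_iff] <;> omega

lemma mul_permMat_col {n : ℕ} (B : Matrix (Fin n) (Fin n) ℂ) (w : Equiv.Perm (Fin n)) (j : Fin n) :
    (fun a => (B * permMat n w) a j) = B *ᵥ Pi.single (w j) 1 := by
  ext a
  simp [mul_apply, permMat]

lemma inHess_matFlag_of_mul_eq {n : ℕ} {X B N : Matrix (Fin n) (Fin n) ℂ} (w : Equiv.Perm (Fin n))
    (hXB : X * B = B * N) (hN : ∀ s j, N (w s) (w j) ≠ 0 → s < j) :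
    InHess n X (fun r => r - 1) (matFlag n (B * permMat n w)) := by
  intro i _ v hv
  induction hv using Submodule.span_induction with
  | mem c hc =>
    obtain ⟨j, hj, rfl⟩ := hc
    rw [mul_permMat_col, mulVec_mulVec, hXB, ← mulVec_mulVec, mulVec_single_one_eq_sum N w,
      mulVec_sum]
    refine Submodule.sum_mem _ fun s _ => ?_
    rw [mulVec_smul]
    by_cases hs : N (w s) (w j) = 0
    · rw [hs, zero_smul]
      exact Submodule.zero_mem _
    · have := Fin.lt_def.1 (hN s j hs)
      exact Submodule.smul_mem _ _
        (Submodule.subset_span ⟨s, by dsimp only; omega, (mul_permMat_col B w s).symm⟩)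
  | zero => rw [mulVec_zero]; exact Submodule.zero_mem _
  | add u v _ _ hu hv => rw [mulVec_add]; exact Submodule.add_mem _ hu hv
  | smul a u _ hu => rw [mulVec_smul]; exact Submodule.smul_mem _ a hu

def boxesBeforeCol (lam : List ℕ) (j : ℕ) : ℕ :=
  ∑ i' ∈ Finset.range lam.length, min (lam.getD i' 0) j

def boxesInColFrom (lam : List ℕ) (i j : ℕ) : ℕ :=
  ((Finset.Ico i lam.length).filter (fun i' => j < lam.getD i' 0)).card

lemma baseLabel_eq_add (lam : List ℕ) (i j : ℕ) :
    baseLabel lam i j = boxesBeforeCol lam j + boxesInColFrom lam i j := rfl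

lemma boxesBeforeCol_succ (lam : List ℕ) (j : ℕ) :
    boxesBeforeCol lam (j + 1) = boxesBeforeCol lam j + boxesInColFrom lam 0 j := by
  rw [boxesBeforeCol, boxesBeforeCol, boxesInColFrom, ← Finset.range_eq_Ico, Finset.card_filter,
    ← Finset.sum_add_distrib]
  refine Finset.sum_congr rfl fun i _ => ?_
  split_ifs <;> omega

lemma boxesBeforeCol_mono (lam : List ℕ) : Monotone (boxesBeforeCol lam) :=
  fun _ _ h => Finset.sum_le_sum fun _ _ => min_le_min le_rfl h

lemma boxesInColFrom_anti (lam : List ℕ) (j : ℕ) {i i' : ℕ} (h : i ≤ i') :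
    boxesInColFrom lam i' j ≤ boxesInColFrom lam i j :=
  Finset.card_le_card (Finset.filter_subset_filter _ (Finset.Ico_subset_Ico h le_rfl))

lemma boxesInColFrom_lt {lam : List ℕ} {i i' j : ℕ} (hbox : IsBox lam i j) (h : i < i') :
    boxesInColFrom lam i' j < boxesInColFrom lam i j := by
  refine Finset.card_lt_card ((Finset.ssubset_iff_of_subset
    (Finset.filter_subset_filter _ (Finset.Ico_subset_Ico h.le le_rfl))).2 ⟨i, ?_, ?_⟩)
  · exact Finset.mem_filter.2 ⟨Finset.mem_Ico.2 ⟨le_rfl, hbox.1⟩, hbox.2⟩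
  · intro hi
    have := (Finset.mem_Ico.1 (Finset.mem_filter.1 hi).1).1
    omega

lemma baseLabel_le_boxesBeforeCol_succ (lam : List ℕ) (i j : ℕ) :
    baseLabel lam i j ≤ boxesBeforeCol lam (j + 1) := by
  rw [baseLabel_eq_add, boxesBeforeCol_succ]
  exact Nat.add_le_add_left (boxesInColFrom_anti lam j (Nat.zero_le i)) _

lemma boxesBeforeCol_lt_baseLabel {lam : List ℕ} {i j : ℕ} (hbox : IsBox lam i j) :
    boxesBeforeCol lam j < baseLabel lam i j := by
  rw [baseLabel_eq_add]
  have := boxesInColFrom_lt hbox (Nat.lt_succ_self i)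
  omega

lemma baseLabel_lt_of_lt_col (lam : List ℕ) {i i' j j' : ℕ} (hbox : IsBox lam i' j')
    (h : j < j') : baseLabel lam i j < baseLabel lam i' j' :=
  calc baseLabel lam i j ≤ boxesBeforeCol lam (j + 1) := baseLabel_le_boxesBeforeCol_succ lam i j
    _ ≤ boxesBeforeCol lam j' := boxesBeforeCol_mono lam h
    _ < baseLabel lam i' j' := boxesBeforeCol_lt_baseLabel hbox

lemma baseLabel_injOn {lam : List ℕ} {i j i' j' : ℕ} (hbox : IsBox lam i j)
    (hbox' : IsBox lam i' j') (h : baseLabel lam i j = baseLabel lam i' j') : i = i' ∧ j = j' := by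
  obtain hj | rfl | hj := lt_trichotomy j j'
  · exact absurd h (baseLabel_lt_of_lt_col lam hbox' hj).ne
  · rw [baseLabel_eq_add, baseLabel_eq_add, Nat.add_left_cancel_iff] at h
    obtain hi | rfl | hi := lt_trichotomy i i'
    · exact absurd h (boxesInColFrom_lt hbox hi).ne'
    · exact ⟨rfl, rfl⟩
    · exact absurd h (boxesInColFrom_lt hbox' hi).ne
  · exact absurd h (baseLabel_lt_of_lt_col lam hbox hj).ne'

lemma IsBox.of_le {lam : List ℕ} {i j j' : ℕ} (h : IsBox lam i j) (hj : j' ≤ j) :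
    IsBox lam i j' :=
  ⟨h.1, lt_of_le_of_lt hj h.2⟩

namespace RightNbr

variable {lam : List ℕ} {a a' b b' : ℕ}

lemma lt (h : RightNbr lam a b) : a < b := by
  obtain ⟨i, j, hbox, ha, hb⟩ := h
  have := baseLabel_lt_of_lt_col lam (i := i) hbox (Nat.lt_succ_self j)
  omega

lemma left_unique (h : RightNbr lam a b) (h' : RightNbr lam a' b) : a = a' := by
  obtain ⟨i, j, hbox, ha, hb⟩ := h
  obtain ⟨i', j', hbox', ha', hb'⟩ := h'
  obtain ⟨rfl, hj⟩ := baseLabel_injOn hbox hbox' (hb.trans hb'.symm)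
  obtain rfl : j = j' := by omega
  omega

lemma right_unique (h : RightNbr lam a b) (h' : RightNbr lam a b') : b = b' := by
  obtain ⟨i, j, hbox, ha, hb⟩ := h
  obtain ⟨i', j', hbox', ha', hb'⟩ := h'
  obtain ⟨rfl, rfl⟩ := baseLabel_injOn (hbox.of_le j.le_succ) (hbox'.of_le j'.le_succ)
    (ha.trans ha'.symm)
  omega

end RightNbr

/-- The column of the box labelled `a + 1` in the base filling (`0` if there is no such box). -/
def labelCol (lam : List ℕ) (a : ℕ) : ℕ :=
  if h : ∃ j i, IsBox lam i j ∧ baseLabel lam i j = a + 1 then Nat.find h else 0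

lemma labelCol_eq {lam : List ℕ} {i j a : ℕ} (hbox : IsBox lam i j)
    (h : baseLabel lam i j = a + 1) : labelCol lam a = j := by
  have hex : ∃ j i, IsBox lam i j ∧ baseLabel lam i j = a + 1 := ⟨j, i, hbox, h⟩
  rw [labelCol, dif_pos hex]
  obtain ⟨i', hbox', h'⟩ := Nat.find_spec hex
  exact (baseLabel_injOn hbox' hbox (h'.trans h.symm)).2

lemma RightNbr.labelCol_eq {lam : List ℕ} {a b : ℕ} (h : RightNbr lam a b) :
    labelCol lam b = labelCol lam a + 1 := by
  obtain ⟨i, j, hbox, ha, hb⟩ := h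
  rw [_root_.labelCol_eq hbox hb, _root_.labelCol_eq (hbox.of_le j.le_succ) ha]

lemma exists_rightNbr_of_labelCol_ne_zero {lam : List ℕ} {b : ℕ} (h : labelCol lam b ≠ 0) :
    ∃ a < b, RightNbr lam a b := by
  by_cases hex : ∃ j i, IsBox lam i j ∧ baseLabel lam i j = b + 1
  · obtain ⟨i, hbox, hb⟩ := Nat.find_spec hex
    rw [labelCol_eq hbox hb] at h
    obtain ⟨j, hj⟩ := Nat.exists_eq_add_one_of_ne_zero h
    rw [hj] at hbox hb
    have hpos := boxesBeforeCol_lt_baseLabel (hbox.of_le j.le_succ)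
    have hlt := baseLabel_lt_of_lt_col lam (i := i) hbox j.lt_succ_self
    exact ⟨baseLabel lam i j - 1, by omega, i, j, hbox, by omega, hb⟩
  · exact absurd (by rw [labelCol, dif_neg hex]) h

section Inversions

variable {n : ℕ} {lam : List ℕ} {w : Equiv.Perm (Fin n)}

lemma RowStrictT.lt_of_rightNbr (hrs : RowStrictT n lam w) {s j : Fin n}
    (h : RightNbr lam (w s) (w j)) : s < j := by
  obtain ⟨i, j', hbox, hs, hj⟩ := h
  exact hrs i j' hbox s j hs.symm hj.symm

lemma SpringerInvT.labelCol_le {k ℓ : Fin n} (h : SpringerInvT n lam w k ℓ) :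
    labelCol lam (w k) ≤ labelCol lam (w ℓ) := by
  obtain ⟨-, ik, jk, il, jl, hk, hl, hlk, hll, hcol, -⟩ := h
  rw [labelCol_eq hk hlk, labelCol_eq hl hll]
  omega

lemma SpringerInvT.lt_of_rightNbr {k ℓ b : Fin n} (h : SpringerInvT n lam w k ℓ)
    (hr : RightNbr lam (w ℓ) (w b)) : k < b := by
  obtain ⟨-, ik, jk, il, jl, -, hl, -, hll, -, hright⟩ := h
  obtain ⟨i, j, hbox, hi, hb⟩ := hr
  obtain ⟨rfl, rfl⟩ := baseLabel_injOn (hbox.of_le j.le_succ) hl (hi.trans hll.symm)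
  have := hright b hbox hb.symm
  simp only at this
  exact Fin.lt_def.2 (by omega)

end Inversions

section Xlam

variable {n : ℕ} {lam : List ℕ}

lemma Xlam_apply (a b : Fin n) : Xlam n lam a b = if RightNbr lam a b then 1 else 0 := rfl

lemma rightNbr_of_Xlam_apply_ne_zero {a b : Fin n} (h : Xlam n lam a b ≠ 0) :
    RightNbr lam a b := by
  by_contra hr
  exact h (if_neg hr)

lemma Xlam_pow_eq_zero : Xlam n lam ^ n = 0 :=
  pow_card_eq_zero_of_apply_ne_zero_lt fun _ _ h => (rightNbr_of_Xlam_apply_ne_zero h).lt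

lemma labelCol_eq_add_of_Xlam_pow_apply_ne_zero {m : ℕ} {a b : Fin n}
    (h : (Xlam n lam ^ m) a b ≠ 0) : labelCol lam b = labelCol lam a + m :=
  eq_add_of_pow_apply_ne_zero (fun a : Fin n => labelCol lam a)
    (fun _ _ h => (rightNbr_of_Xlam_apply_ne_zero h).labelCol_eq) m h

lemma Xlam_pow_apply_eq_zero_of_lt {w : Equiv.Perm (Fin n)} (hrs : RowStrictT n lam w) (m : ℕ)
    {s k : Fin n} (h : k < s) : (Xlam n lam ^ m) (w s) (w k) = 0 := by
  by_contra hne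
  have hlt : ∀ a b, Xlam n lam a b ≠ 0 → (w.symm a : ℕ) < w.symm b := fun a b hab => by
    have hr := rightNbr_of_Xlam_apply_ne_zero hab
    rw [← w.apply_symm_apply a, ← w.apply_symm_apply b] at hr
    exact hrs.lt_of_rightNbr hr
  have := add_le_of_pow_apply_ne_zero (fun a => (w.symm a : ℕ)) hlt m hne
  simp only [Equiv.symm_apply_apply] at this
  exact absurd h (not_lt.2 (Fin.le_def.2 (by omega)))

lemma transpose_Xlam_mul_Xlam : (Xlam n lam)ᵀ * Xlam n lam =
    diagonal (fun b : Fin n => if ∃ a : Fin n, RightNbr lam a b then (1 : ℂ) else 0) := by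
  ext b b'
  rw [mul_apply, diagonal_apply]
  simp only [transpose_apply, Xlam_apply, ite_mul, one_mul, zero_mul]
  split_ifs with hbb hex
  · subst hbb
    obtain ⟨a, ha⟩ := hex
    rw [Finset.sum_eq_single a (fun c _ hc => if_neg fun h => hc (Fin.ext (h.left_unique ha)))
      (by simp), if_pos ha, if_pos ha]
  · subst hbb
    exact Finset.sum_eq_zero fun a _ => if_neg fun h => hex ⟨a, h⟩
  · refine Finset.sum_eq_zero fun a _ => ?_
    split_ifs with h h'
    · exact absurd (Fin.ext (h.right_unique h')) hbb
    all_goals rfl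

lemma Xlam_pow_succ_mul_single_mul {a b : Fin n} (hab : labelCol lam a ≤ labelCol lam b) (m : ℕ) :
    Xlam n lam ^ (m + 1) * single a b 1 * (Xlam n lam)ᵀ ^ (m + 1) * Xlam n lam =
      Xlam n lam * (Xlam n lam ^ m * single a b 1 * (Xlam n lam)ᵀ ^ m) := by
  set X := Xlam n lam
  have hL : X ^ (m + 1) * single a b 1 * Xᵀ ^ (m + 1) * X =
      X ^ (m + 1) * single a b 1 * Xᵀ ^ m * (Xᵀ * X) := by
    rw [pow_succ Xᵀ]; simp only [Matrix.mul_assoc]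
  have hR : X * (X ^ m * single a b 1 * Xᵀ ^ m) = X ^ (m + 1) * single a b 1 * Xᵀ ^ m := by
    rw [pow_succ']; simp only [Matrix.mul_assoc]
  rw [hL, hR, transpose_Xlam_mul_Xlam]
  ext c e
  rw [mul_diagonal, mul_single_mul_apply, ← transpose_pow, transpose_apply, mul_one]
  by_cases hc : (X ^ (m + 1)) c a = 0
  · simp [hc]
  by_cases he : (X ^ m) e b = 0
  · simp [he]
  -- `e` lies `m` columns left of `b`, which is at least as far right as `a`, so `e` has a left
  -- neighbour; on such `e` the projection `Xᵀ X` is the identity.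
  have h1 := labelCol_eq_add_of_Xlam_pow_apply_ne_zero hc
  have h2 := labelCol_eq_add_of_Xlam_pow_apply_ne_zero he
  obtain ⟨d, hd, hr⟩ := exists_rightNbr_of_labelCol_ne_zero (lam := lam) (b := e) (by omega)
  rw [if_pos ⟨⟨d, hd.trans e.isLt⟩, hr⟩, mul_one]

lemma sum_Xlam_pow_mul_single_mul_Xlam {a b : Fin n} (hab : labelCol lam a ≤ labelCol lam b) :
    (∑ m ∈ Finset.range n, Xlam n lam ^ m * single a b 1 * (Xlam n lam)ᵀ ^ m) * Xlam n lam =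
      Xlam n lam * (∑ m ∈ Finset.range n, Xlam n lam ^ m * single a b 1 * (Xlam n lam)ᵀ ^ m) +
        single a b 1 * Xlam n lam := by
  obtain ⟨N, hN⟩ : ∃ N, n = N + 1 := ⟨n - 1, by have := a.pos; omega⟩
  have htop : Xlam n lam * (Xlam n lam ^ N * single a b 1 * (Xlam n lam)ᵀ ^ N) = 0 := by
    rw [← Matrix.mul_assoc, ← Matrix.mul_assoc, ← pow_succ', ← hN, Xlam_pow_eq_zero,
      Matrix.zero_mul, Matrix.zero_mul]
  have hrange : Finset.range n = Finset.range (N + 1) := by rw [hN]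
  rw [Finset.sum_mul, Finset.mul_sum, hrange, Finset.sum_range_succ', Finset.sum_range_succ,
    htop, add_zero]
  simp [Xlam_pow_succ_mul_single_mul hab]

end Xlam

section Bk

variable {n : ℕ} {lam : List ℕ} {w : Equiv.Perm (Fin n)}

/-- The `m = 0` summand of `BkMat n lam w k y - 1`. -/
def bkCoordMat (n : ℕ) (lam : List ℕ) (w : Equiv.Perm (Fin n)) (k : Fin n) (y : Fin n → ℂ) :
    Matrix (Fin n) (Fin n) ℂ :=
  ∑ ℓ, if SpringerInvT n lam w k ℓ then y ℓ • single (w k) (w ℓ) 1 else 0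

lemma BkMat_mul_Xlam (k : Fin n) (y : Fin n → ℂ) :
    BkMat n lam w k y * Xlam n lam =
      Xlam n lam * BkMat n lam w k y + bkCoordMat n lam w k y * Xlam n lam := by
  rw [BkMat, bkCoordMat, add_mul, mul_add, one_mul, mul_one, Finset.sum_mul, Finset.mul_sum,
    Finset.sum_mul, add_assoc, ← Finset.sum_add_distrib]
  refine congrArg _ (Finset.sum_congr rfl fun ℓ _ => ?_)
  split_ifs with h
  · rw [smul_mul_assoc, mul_smul_comm, smul_mul_assoc, ← smul_add,
      sum_Xlam_pow_mul_single_mul_Xlam h.labelCol_le]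
  · simp

lemma BkMat_apply_eq_one_apply {k : Fin n} {a b : Fin n}
    (h : ∀ ℓ m, SpringerInvT n lam w k ℓ → (Xlam n lam ^ m) a (w k) * (Xlam n lam ^ m) b (w ℓ) = 0)
    (y : Fin n → ℂ) : BkMat n lam w k y a b = (1 : Matrix (Fin n) (Fin n) ℂ) a b := by
  rw [BkMat, Matrix.add_apply, Matrix.sum_apply, Finset.sum_eq_zero, add_zero]
  intro ℓ _
  split_ifs with hℓ
  · rw [Matrix.smul_apply, Matrix.sum_apply, Finset.sum_eq_zero, smul_zero]
    intro m _
    rw [mul_single_mul_apply, ← transpose_pow, transpose_apply, mul_one, h ℓ m hℓ]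
  · rfl

lemma BkMat_apply_of_lt (hrs : RowStrictT n lam w) {k s : Fin n} (h : k < s) (y : Fin n → ℂ)
    (b : Fin n) :
    BkMat n lam w k y (w s) b = (1 : Matrix (Fin n) (Fin n) ℂ) (w s) b :=
  BkMat_apply_eq_one_apply (fun _ m _ => by rw [Xlam_pow_apply_eq_zero_of_lt hrs m h, zero_mul]) y

lemma BkMat_apply_of_le (hrs : RowStrictT n lam w) {k t : Fin n} (h : k ≤ t) (y : Fin n → ℂ)
    (a : Fin n) :
    BkMat n lam w k y a (w t) = (1 : Matrix (Fin n) (Fin n) ℂ) a (w t) :=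
  BkMat_apply_eq_one_apply
    (fun _ m hℓ => by rw [Xlam_pow_apply_eq_zero_of_lt hrs m (hℓ.1.trans_le h), mul_zero]) y

end Bk

section PartialProducts

variable {n : ℕ} {lam : List ℕ} {w : Equiv.Perm (Fin n)} (x : Fin n → Fin n → ℂ)

def partialB (n : ℕ) (lam : List ℕ) (w : Equiv.Perm (Fin n)) (x : Fin n → Fin n → ℂ) (k : ℕ) :
    Matrix (Fin n) (Fin n) ℂ :=
  ((List.ofFn fun k : Fin n => BkMat n lam w k (x k)).take k).reverse.prod

lemma partialB_zero : partialB n lam w x 0 = 1 := by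
  simp [partialB]

lemma partialB_succ {k : ℕ} (hk : k < n) :
    partialB n lam w x (k + 1) = BkMat n lam w ⟨k, hk⟩ (x ⟨k, hk⟩) * partialB n lam w x k := by
  rw [partialB, partialB, List.take_add_one, List.reverse_append, List.prod_append,
    List.getElem?_eq_getElem (by simpa using hk), List.getElem_ofFn]
  simp

lemma partialB_self : partialB n lam w x n = bigB n lam w x := by
  rw [partialB, bigB, List.take_of_length_le (List.length_ofFn).le]

lemma partialB_apply_of_le (hrs : RowStrictT n lam w) {k : ℕ} {s : Fin n} (hks : k ≤ s)
    (b : Fin n) : partialB n lam w x k (w s) b = (1 : Matrix (Fin n) (Fin n) ℂ) (w s) b := by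
  induction k with
  | zero => rw [partialB_zero]
  | succ k ih =>
    have hk : k < n := by omega
    rw [partialB_succ x hk, mul_apply]
    simp_rw [BkMat_apply_of_lt hrs (show (⟨k, hk⟩ : Fin n) < s from Fin.lt_def.2 hks)]
    rw [← mul_apply, Matrix.one_mul, ih (by omega)]

lemma partialB_apply_of_le_succ (hrs : RowStrictT n lam w) {k : ℕ} {t : Fin n}
    (hkt : k ≤ t + 1) (a : Fin n) :
    partialB n lam w x k a (w t) = (1 : Matrix (Fin n) (Fin n) ℂ) a (w t) := by
  induction k generalizing a with
  | zero => rw [partialB_zero]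
  | succ k ih =>
    have hk : k < n := by omega
    rw [partialB_succ x hk, mul_apply]
    simp_rw [ih (by omega)]
    rw [← mul_apply, Matrix.mul_one,
      BkMat_apply_of_le hrs (Fin.le_def.2 (show k ≤ (t : ℕ) by omega))]

end PartialProducts

section Conjugation

variable {n : ℕ} {lam : List ℕ} {w : Equiv.Perm (Fin n)} (x : Fin n → Fin n → ℂ)

lemma Xlam_mul_partialB_apply (hrs : RowStrictT n lam w) {t ℓ : Fin n}
    (h : SpringerInvT n lam w t ℓ) (e : Fin n) :
    (Xlam n lam * partialB n lam w x t) (w ℓ) e = Xlam n lam (w ℓ) e := by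
  conv_rhs => rw [← Matrix.mul_one (Xlam n lam)]
  rw [mul_apply, mul_apply]
  refine Finset.sum_congr rfl fun c _ => ?_
  by_cases hX : Xlam n lam (w ℓ) c = 0
  · rw [hX, zero_mul, zero_mul]
  · obtain ⟨s, rfl⟩ := w.surjective c
    rw [partialB_apply_of_le x hrs (h.lt_of_rightNbr (rightNbr_of_Xlam_apply_ne_zero hX)).le]

lemma bkCoordMat_mul_Xlam_mul_partialB (hrs : RowStrictT n lam w) (t : Fin n) (y : Fin n → ℂ) :
    bkCoordMat n lam w t y * Xlam n lam * partialB n lam w x t =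
      bkCoordMat n lam w t y * Xlam n lam := by
  rw [bkCoordMat, Finset.sum_mul, Finset.sum_mul]
  refine Finset.sum_congr rfl fun ℓ _ => ?_
  split_ifs with h
  · rw [smul_mul_assoc, smul_mul_assoc, Matrix.mul_assoc,
      single_mul_eq_single_mul (Xlam_mul_partialB_apply x hrs h)]
  · simp

lemma partialB_succ_mul_bkCoordMat (hrs : RowStrictT n lam w) (t : Fin n) (y : Fin n → ℂ) :
    partialB n lam w x (t + 1) * bkCoordMat n lam w t y = bkCoordMat n lam w t y := by
  rw [bkCoordMat, Finset.mul_sum]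
  refine Finset.sum_congr rfl fun ℓ _ => ?_
  split_ifs
  · rw [mul_smul_comm, mul_single_eq_single (partialB_apply_of_le_succ x hrs le_rfl)]
  · rw [Matrix.mul_zero]

lemma Xlam_mul_partialB (hrs : RowStrictT n lam w) {k : ℕ} (hk : k ≤ n) :
    Xlam n lam * partialB n lam w x k = partialB n lam w x k *
      (1 - ∑ t : Fin n, if (t : ℕ) < k then bkCoordMat n lam w t (x t) else 0) * Xlam n lam := by
  induction k with
  | zero => simp [partialB_zero]
  | succ k ih =>
    have hk' : k < n := by omega
    set X := Xlam n lam
    set g := BkMat n lam w ⟨k, hk'⟩ (x ⟨k, hk'⟩)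
    set C := bkCoordMat n lam w ⟨k, hk'⟩ (x ⟨k, hk'⟩)
    have hXg : X * g = g * X - C * X := eq_sub_of_add_eq (BkMat_mul_Xlam _ _).symm
    have hCP : C * X * partialB n lam w x k = C * X :=
      bkCoordMat_mul_Xlam_mul_partialB x hrs ⟨k, hk'⟩ _
    have hPC : partialB n lam w x (k + 1) * C = C :=
      partialB_succ_mul_bkCoordMat x hrs ⟨k, hk'⟩ _
    rw [Fin.sum_ite_val_lt_succ hk']
    calc X * partialB n lam w x (k + 1)
        = g * (X * partialB n lam w x k) - C * X * partialB n lam w x k := by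
          rw [partialB_succ x hk', ← Matrix.mul_assoc, hXg, sub_mul, Matrix.mul_assoc]
      _ = partialB n lam w x (k + 1) *
            (1 - ∑ t : Fin n, if (t : ℕ) < k then bkCoordMat n lam w t (x t) else 0) * X -
          partialB n lam w x (k + 1) * C * X := by
          rw [ih (by omega), hCP, hPC, partialB_succ x hk']
          simp only [Matrix.mul_assoc, g]
      _ = _ := by noncomm_ring

end Conjugation

section Springer

variable {n : ℕ} {lam : List ℕ} {w : Equiv.Perm (Fin n)} (x : Fin n → Fin n → ℂ)

def inversionMat (n : ℕ) (lam : List ℕ) (w : Equiv.Perm (Fin n)) (x : Fin n → Fin n → ℂ) :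
    Matrix (Fin n) (Fin n) ℂ :=
  ∑ t, bkCoordMat n lam w t (x t)

lemma Xlam_mul_bigB (hrs : RowStrictT n lam w) :
    Xlam n lam * bigB n lam w x = bigB n lam w x * (1 - inversionMat n lam w x) * Xlam n lam := by
  simpa only [Fin.is_lt, if_true, partialB_self, inversionMat] using Xlam_mul_partialB x hrs le_rfl

lemma inversionMat_apply (t ℓ : Fin n) :
    inversionMat n lam w x (w t) (w ℓ) = if SpringerInvT n lam w t ℓ then x t ℓ else 0 := by
  simp only [inversionMat, bkCoordMat, Matrix.sum_apply,
    apply_ite (fun M : Matrix (Fin n) (Fin n) ℂ => M (w t) (w ℓ))]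
  simp only [Matrix.smul_apply, single_apply, w.injective.eq_iff, smul_eq_mul]
  rw [Fintype.sum_eq_single t fun t' ht' => by simp [ht'],
    Fintype.sum_eq_single ℓ fun ℓ' hℓ' => by simp [hℓ']]
  simp

lemma inversionMat_mulVec_single (ℓ : Fin n) :
    inversionMat n lam w x *ᵥ Pi.single (w ℓ) 1 =
      ∑ t, if SpringerInvT n lam w t ℓ then x t ℓ • Pi.single (w t) 1 else 0 := by
  simp only [mulVec_single_one_eq_sum _ w, inversionMat_apply, ite_smul, zero_smul]

lemma lt_of_one_sub_inversionMat_mul_Xlam_apply_ne_zero (hrs : RowStrictT n lam w) {s j : Fin n}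
    (h : ((1 - inversionMat n lam w x) * Xlam n lam) (w s) (w j) ≠ 0) : s < j := by
  rw [Matrix.sub_mul, Matrix.one_mul, Matrix.sub_apply] at h
  by_cases hX : Xlam n lam (w s) (w j) = 0
  · rw [hX, zero_sub, neg_ne_zero, mul_apply] at h
    obtain ⟨c, -, hc⟩ := Finset.exists_ne_zero_of_sum_ne_zero h
    obtain ⟨ℓ, rfl⟩ := w.surjective c
    have hA := left_ne_zero_of_mul hc
    rw [inversionMat_apply] at hA
    have hinv : SpringerInvT n lam w s ℓ := by
      by_contra h'
      exact hA (if_neg h')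
    exact hinv.lt_of_rightNbr (rightNbr_of_Xlam_apply_ne_zero (right_ne_zero_of_mul hc))
  · exact hrs.lt_of_rightNbr (rightNbr_of_Xlam_apply_ne_zero hX)

lemma Xlam_mulVec_single_of_rightNbr {a b : Fin n} (h : RightNbr lam a b) :
    Xlam n lam *ᵥ Pi.single b 1 = Pi.single a 1 := by
  ext c
  rw [mulVec_single_one, col_apply, Xlam_apply, Pi.single_apply]
  exact if_congr ⟨fun hc => Fin.ext (hc.left_unique h), fun hc => hc ▸ h⟩ rfl rfl

end Springer

theorem stmt16_general (n : ℕ) (lam : List ℕ)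
    (w : Equiv.Perm (Fin n)) (hrs : RowStrictT n lam w)
    (x : Fin n → Fin n → ℂ) :
    (∀ ℓ r : Fin n, RightNbr lam (w ℓ : ℕ) (w r : ℕ) →
      (bigB n lam w x).mulVec (Pi.single (w ℓ) 1) =
        (Xlam n lam).mulVec ((bigB n lam w x).mulVec (Pi.single (w r) 1)) +
          ∑ t : Fin n, if SpringerInvT n lam w t ℓ then
            x t ℓ • (bigB n lam w x).mulVec (Pi.single (w t) 1) else 0) ∧
    InHess n (Xlam n lam) (fun r => r - 1) (matFlag n (bigB n lam w x * permMat n w)) := by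
  have hconj := Xlam_mul_bigB x hrs
  refine ⟨fun ℓ r hnb => ?_, inHess_matFlag_of_mul_eq w (by rw [hconj, Matrix.mul_assoc])
    fun s j => lt_of_one_sub_inversionMat_mul_Xlam_apply_ne_zero x hrs⟩
  rw [mulVec_mulVec, hconj, ← mulVec_mulVec, ← mulVec_mulVec, Xlam_mulVec_single_of_rightNbr hnb,
    sub_mulVec, one_mulVec, inversionMat_mulVec_single, mulVec_sub, mulVec_sum]
  simp only [apply_ite (bigB n lam w x *ᵥ ·), mulVec_smul, mulVec_zero, sub_add_cancel]

/-- for `V_• = g_n⋯g_2 wE_•` with `g_k ∈ B_k(w)` and basis vectors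
`v_r = g_n⋯g_2 e_{w(r)}`, whenever `r` is the entry directly right of `ℓ` in `R(w)` one has
`v_ℓ = X_λ v_r + Σ_{(t,ℓ) ∈ inv_λ(w)} x_{t,ℓ} v_t`; consequently `V_•` lies in the Springer
fiber of `X_λ`. -/
theorem stmt16 (n : ℕ) (lam : List ℕ) (hn : lam.sum = n)
    (w : Equiv.Perm (Fin n)) (hrs : RowStrictT n lam w)
    (x : Fin n → Fin n → ℂ)
    (hx : ∀ k ℓ : Fin n, x k ℓ ≠ 0 → SpringerInvT n lam w k ℓ) :
    (∀ ℓ r : Fin n, RightNbr lam (w ℓ : ℕ) (w r : ℕ) →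
      (bigB n lam w x).mulVec (Pi.single (w ℓ) 1) =
        (Xlam n lam).mulVec ((bigB n lam w x).mulVec (Pi.single (w r) 1)) +
          ∑ t : Fin n, if SpringerInvT n lam w t ℓ then
            x t ℓ • (bigB n lam w x).mulVec (Pi.single (w t) 1) else 0) ∧
    InHess n (Xlam n lam) (fun r => r - 1) (matFlag n (bigB n lam w x * permMat n w)) :=
  stmt16_general n lam w hrs x
end
end

section
/- Let λ be a partition of n and h a Hessenberg function with h(i) < i for all i. If R is an h-strict row-strict tableau of shape λ, then std(R), the standard tableau obtained from R by reordering the entries within each column to increase from top to bottom, is also h-strict. -/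
open Matrix

attribute [local instance] Classical.propDecidable

noncomputable section

/-!
Fix a box `(i, j+1)` of `S`. Each of the `i+1` entries `S i' (j+1)`, `i' ≤ i`, sits in column
`j+1` of `T`, and its left neighbour there is at most `h (S i' (j+1)) ≤ h (S i (j+1))`. These
left neighbours are distinct entries of column `j`, so column `j` of `S`, being sorted, has at
least `i+1` entries bounded by `h (S i (j+1))`; in particular its `i`-th entry `S i j` is.
-/

open Finset

theorem IsBox.of_succ {lam : List ℕ} {i j : ℕ} (hb : IsBox lam i (j+1)) : IsBox lam i j :=
  ⟨hb.1, Nat.lt_of_succ_lt hb.2⟩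

theorem IsPartitionL.isBox_of_le {lam : List ℕ} (hpart : IsPartitionL lam) {a b j : ℕ}
    (hab : a ≤ b) (hb : IsBox lam b j) : IsBox lam a j :=
  ⟨hab.trans_lt hb.1, hb.2.trans_le (hpart a b hab)⟩

theorem Finset.exists_le_of_lt_card {A : Finset ℕ} {i : ℕ} (hA : i < #A) : ∃ a ∈ A, i ≤ a := by
  by_contra! hsmall
  have hsub : A ⊆ range i := fun a ha => mem_range.mpr (hsmall a ha)
  exact (card_le_card hsub).not_gt (by rwa [card_range])

section SortedColumns

variable {lam : List ℕ} {S : ℕ → ℕ → ℕ}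

theorem col_lt_of_lt (hpart : IsPartitionL lam)
    (hinc : ∀ i j, IsBox lam i j → IsBox lam (i+1) j → S i j < S (i+1) j)
    {j a b : ℕ} (hab : a < b) (hb : IsBox lam b j) : S a j < S b j := by
  induction b, hab using Nat.le_induction with
  | base => exact hinc a j (hpart.isBox_of_le a.le_succ hb) hb
  | succ b _ ih =>
    have hb' : IsBox lam b j := hpart.isBox_of_le b.le_succ hb
    exact (ih hb').trans (hinc b j hb' hb)

theorem col_le_of_le (hpart : IsPartitionL lam)
    (hinc : ∀ i j, IsBox lam i j → IsBox lam (i+1) j → S i j < S (i+1) j)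
    {j a b : ℕ} (hab : a ≤ b) (hb : IsBox lam b j) : S a j ≤ S b j := by
  rcases hab.eq_or_lt with rfl | hlt
  · rfl
  · exact (col_lt_of_lt hpart hinc hlt hb).le

theorem eq_of_col_eq (hpart : IsPartitionL lam)
    (hinc : ∀ i j, IsBox lam i j → IsBox lam (i+1) j → S i j < S (i+1) j)
    {j a b : ℕ} (ha : IsBox lam a j) (hb : IsBox lam b j) (hab : S a j = S b j) : a = b := by
  rcases lt_trichotomy a b with hlt | heq | hgt
  · exact absurd hab (col_lt_of_lt hpart hinc hlt hb).ne
  · exact heq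
  · exact absurd hab (col_lt_of_lt hpart hinc hgt ha).ne'

theorem col_le_of_lt_card (hpart : IsPartitionL lam)
    (hinc : ∀ i j, IsBox lam i j → IsBox lam (i+1) j → S i j < S (i+1) j)
    {i j v : ℕ} {A : Finset ℕ} (hA : i < #A) (hbox : ∀ a ∈ A, IsBox lam a j)
    (hle : ∀ a ∈ A, S a j ≤ v) : S i j ≤ v := by
  obtain ⟨a, ha, hia⟩ := exists_le_of_lt_card hA
  exact (col_le_of_le hpart hinc hia (hbox a ha)).trans (hle a ha)

end SortedColumns

theorem ColSortedOf.lt_card_col_le_h {lam : List ℕ} (hpart : IsPartitionL lam) {h : ℕ → ℕ}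
    (hmono : Monotone h) {T S : ℕ → ℕ → ℕ}
    (hinj : ∀ r r' j, IsBox lam r j → IsBox lam r' j → T r j = T r' j → r = r')
    (hhsT : HStrictF lam h T) (hsort : ColSortedOf lam T S) {i j : ℕ}
    (hbox : IsBox lam i (j+1)) :
    i < #((range lam.length).filter fun a => IsBox lam a j ∧ S a j ≤ h (S i (j+1))) := by
  obtain ⟨hsame, hinc⟩ := hsort
  have hcol : ∀ i' ≤ i, IsBox lam i' (j+1) := fun i' hi' => hpart.isBox_of_le hi' hbox
  -- `r i'` is the row of `T` holding `S i' (j+1)`, `a i'` the row of `S` holding its left neighbour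
  choose! r hr using fun i' (hi' : i' ≤ i) => (hsame (j+1) _).2 ⟨i', hcol i' hi', rfl⟩
  choose! a ha using fun i' (hi' : i' ≤ i) =>
    (hsame j (T (r i') j)).1 ⟨r i', (hr i' hi').1.of_succ, rfl⟩
  refine Nat.lt_of_succ_le (le_card_of_inj_on_range a (fun i' hi' => ?_) ?_)
  · have hi' : i' ≤ i := Nat.le_of_lt_succ hi'
    refine mem_filter.mpr ⟨mem_range.mpr (ha i' hi').1.1, (ha i' hi').1, ?_⟩
    calc S (a i') j = T (r i') j := (ha i' hi').2
      _ ≤ h (T (r i') (j+1)) := hhsT _ _ (hr i' hi').1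
      _ = h (S i' (j+1)) := by rw [(hr i' hi').2]
      _ ≤ h (S i (j+1)) := hmono (col_le_of_le hpart hinc hi' hbox)
  · intro i₁ hi₁ i₂ hi₂ heq
    replace hi₁ := Nat.le_of_lt_succ hi₁
    replace hi₂ := Nat.le_of_lt_succ hi₂
    have hT : T (r i₁) j = T (r i₂) j := by rw [← (ha i₁ hi₁).2, ← (ha i₂ hi₂).2, heq]
    have hr_eq : r i₁ = r i₂ := hinj _ _ _ (hr i₁ hi₁).1.of_succ (hr i₂ hi₂).1.of_succ hT
    have hS : S i₁ (j+1) = S i₂ (j+1) := by rw [← (hr i₁ hi₁).2, ← (hr i₂ hi₂).2, hr_eq]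
    exact eq_of_col_eq hpart hinc (hcol i₁ hi₁) (hcol i₂ hi₂) hS

theorem stmt17_general (lam : List ℕ) (hpart : IsPartitionL lam) (h : ℕ → ℕ)
    (hmono : ∀ a b, a ≤ b → h a ≤ h b)
    (T S : ℕ → ℕ → ℕ) (hgood : GoodFilling lam T)
    (hhsT : HStrictF lam h T)
    (hsort : ColSortedOf lam T S) :
    HStrictF lam h S := by
  intro i j hbox
  have hinj : ∀ r r' j, IsBox lam r j → IsBox lam r' j → T r j = T r' j → r = r' :=
    fun r r' j hr hr' hT => (hgood.2.2 r j r' j hr hr' hT).1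
  have hcard := hsort.lt_card_col_le_h hpart (fun a b hab => hmono a b hab) hinj hhsT hbox
  exact col_le_of_lt_card hpart hsort.2 hcard (fun a ha => (mem_filter.mp ha).2.1)
    (fun a ha => (mem_filter.mp ha).2.2)

/-- if `R` is an `h`-strict row-strict tableau of partition shape `λ`, then the
column-sorted tableau `std(R)` is also `h`-strict. -/
theorem stmt17 (lam : List ℕ) (hpart : IsPartitionL lam) (h : ℕ → ℕ)
    (hmono : ∀ a b, a ≤ b → h a ≤ h b)
    (hlt : ∀ i, 1 ≤ i → i ≤ lam.sum → h i < i)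
    (T S : ℕ → ℕ → ℕ) (hgood : GoodFilling lam T)
    (hrsT : RowStrictF lam T) (hhsT : HStrictF lam h T)
    (hsort : ColSortedOf lam T S) :
    HStrictF lam h S :=
  stmt17_general lam hpart h hmono T S hgood hhsT hsort
end
end

section
/- Let λ be a partition of n and h a Hessenberg function with h(i) < i for all i. If R is an h-strict row-strict tableau of shape λ that is not a standard tableau (i.e., some column fails to increase top to bottom), then the number of Hessenberg inversions of R is strictly less than the number of Hessenberg inversions of std(R). In particular, any h-strict tableau with the maximal number of Hessenberg inversions is a standard tableau. -/
open Matrix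

attribute [local instance] Classical.propDecidable

noncomputable section

/-!
Call a pair of boxes `(K, L)` *bounded* if `K` lies in a column weakly left of `L` and
`T L < T K ≤ b(L)`, where `b(L) = h(T r)` for the box `r` right of `L` (and `b(L) = n` at the end
of a row). The Hessenberg inversions are exactly the bounded pairs in which `K` is not above `L`.

For fixed `L` in column `j`, the bounded pairs `(·, L)` are the entries of columns `≤ j` in the
interval `(T L, b(L)]`. Summing over `L`, their number is a difference of two sums that only
depend on the set of entries of each column (the bounds of column `j` are `h` of the entries of
column `j + 1`, plus some `n`'s). So sorting the columns does not change the number of bounded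
pairs. After sorting, no bounded pair has `K` above `L`, while a column descent of `T` produces
such a pair; hence `T` has strictly fewer inversions than `std(T)`.
-/

open Finset

theorem Finset.sum_comp_eq_of_image_fiber_eq {α β γ M : Type*} [AddCommMonoid M]
    [DecidableEq β] [DecidableEq γ] {s : Finset α} {κ : α → β} {f g : α → γ}
    (hf : Set.InjOn f s) (hg : Set.InjOn g s)
    (himage : ∀ b, {a ∈ s | κ a = b}.image f = {a ∈ s | κ a = b}.image g) (F : β → γ → M) :
    ∑ a ∈ s, F (κ a) (f a) = ∑ a ∈ s, F (κ a) (g a) := by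
  have fiber (f : α → γ) (hf : Set.InjOn f s) (b : β) :
      ∑ a ∈ s with κ a = b, F (κ a) (f a) = ∑ x ∈ {a ∈ s | κ a = b}.image f, F b x := by
    rw [sum_image (hf.mono (coe_subset.2 (filter_subset _ _)))]
    exact sum_congr rfl fun a ha => by rw [(mem_filter.1 ha).2]
  rw [← sum_fiberwise_of_maps_to fun _ => mem_image_of_mem κ,
    ← sum_fiberwise_of_maps_to fun _ => mem_image_of_mem κ]
  exact sum_congr rfl fun b _ => by rw [fiber f hf, fiber g hg, himage]

def boxes (lam : List ℕ) : Finset (ℕ × ℕ) := YoungDiagram.cellsOfRowLens lam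

theorem mem_boxes {lam : List ℕ} {p : ℕ × ℕ} : p ∈ boxes lam ↔ IsBox lam p.1 p.2 := by
  rw [boxes, YoungDiagram.mem_cellsOfRowLens]
  exact ⟨fun ⟨hi, hj⟩ => ⟨hi, by rwa [List.getD_eq_getElem _ _ hi]⟩,
    fun ⟨hi, hj⟩ => ⟨hi, by rwa [← List.getD_eq_getElem _ 0 hi]⟩⟩

theorem IsPartitionL.sortedGE {lam : List ℕ} (hpart : IsPartitionL lam) : lam.SortedGE :=
  List.sortedGE_of_getElem_ge_getElem_of_le fun i j hi hj hji => by
    have hji := hpart j i hji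
    rwa [List.getD_eq_getElem _ _ hi, List.getD_eq_getElem _ _ hj] at hji

theorem isBox_iff_lt_colLen {lam : List ℕ} (hpart : IsPartitionL lam) {i j : ℕ} :
    IsBox lam i j ↔ i < (YoungDiagram.ofRowLens lam hpart.sortedGE).colLen j := by
  rw [← YoungDiagram.mem_iff_lt_colLen, ← YoungDiagram.mem_cells]
  exact (mem_boxes (p := (i, j))).symm

theorem IsBox.of_le_row {lam : List ℕ} (hpart : IsPartitionL lam) {i i' j : ℕ}
    (hb : IsBox lam i j) (hi : i' ≤ i) : IsBox lam i' j :=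
  (isBox_iff_lt_colLen hpart).2 (hi.trans_lt ((isBox_iff_lt_colLen hpart).1 hb))

theorem IsBox.of_succ_col {lam : List ℕ} {i j : ℕ} (hb : IsBox lam i (j + 1)) : IsBox lam i j :=
  ⟨hb.1, j.lt_succ_self.trans hb.2⟩

theorem GoodFilling.injOn {lam : List ℕ} {T : ℕ → ℕ → ℕ} (hg : GoodFilling lam T) :
    Set.InjOn (fun p : ℕ × ℕ => T p.1 p.2) (boxes lam) := fun _ hp _ hq hpq =>
  let ⟨h1, h2⟩ := hg.2.2 _ _ _ _ (mem_boxes.1 hp) (mem_boxes.1 hq) hpq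
  Prod.ext h1 h2

theorem HStrictF.rowStrictF {lam : List ℕ} {h : ℕ → ℕ} {T : ℕ → ℕ → ℕ}
    (hhs : HStrictF lam h T) (hg : GoodFilling lam T)
    (hlt : ∀ i, 1 ≤ i → i ≤ lam.sum → h i < i) : RowStrictF lam T := fun i j hb =>
  have := hg.1 i (j + 1) hb
  (hhs i j hb).trans_lt (hlt _ this.1 this.2)

section ColumnSorting

variable {lam : List ℕ} {h : ℕ → ℕ} {T S : ℕ → ℕ → ℕ}

theorem mem_image_col {U : ℕ → ℕ → ℕ} {j m : ℕ} :
    m ∈ {p ∈ boxes lam | p.2 = j}.image (fun p => U p.1 p.2) ↔ ∃ i, IsBox lam i j ∧ U i j = m := by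
  simp only [mem_image, mem_filter, mem_boxes]
  exact ⟨fun ⟨p, ⟨hb, hj⟩, hm⟩ => ⟨p.1, hj ▸ hb, hj ▸ hm⟩,
    fun ⟨i, hb, hm⟩ => ⟨(i, j), ⟨hb, rfl⟩, hm⟩⟩

theorem ColSortedOf.lt_of_lt_row (hpart : IsPartitionL lam) (hsort : ColSortedOf lam T S)
    {i i' j : ℕ} (hi : i' < i) (hb : IsBox lam i j) : S i' j < S i j := by
  induction i with
  | zero => exact absurd hi (Nat.not_lt_zero _)
  | succ i ih =>
    have hstep := hsort.2 i j (hb.of_le_row hpart i.le_succ) hb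
    rcases Nat.lt_succ_iff_lt_or_eq.1 hi with hi | rfl
    · exact (ih hi (hb.of_le_row hpart i.le_succ)).trans hstep
    · exact hstep

theorem ColSortedOf.le_of_le_row (hpart : IsPartitionL lam) (hsort : ColSortedOf lam T S)
    {i i' j : ℕ} (hi : i' ≤ i) (hb : IsBox lam i j) : S i' j ≤ S i j := by
  rcases hi.eq_or_lt with rfl | hi
  · exact le_rfl
  · exact (hsort.lt_of_lt_row hpart hi hb).le

theorem ColSortedOf.goodFilling (hpart : IsPartitionL lam) (hg : GoodFilling lam T)
    (hsort : ColSortedOf lam T S) : GoodFilling lam S := by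
  have preimage {i j : ℕ} (hb : IsBox lam i j) : ∃ i', IsBox lam i' j ∧ T i' j = S i j :=
    (hsort.1 j _).2 ⟨i, hb, rfl⟩
  refine ⟨fun i j hb => ?_, fun m h1 h2 => ?_, fun i j i' j' hb hb' he => ?_⟩
  · obtain ⟨i', hb', he⟩ := preimage hb
    exact he ▸ hg.1 i' j hb'
  · obtain ⟨i, j, hb, he⟩ := hg.2.1 m h1 h2
    obtain ⟨i', hb', he'⟩ := (hsort.1 j m).1 ⟨i, hb, he⟩
    exact ⟨i', j, hb', he'⟩
  · obtain ⟨a, ha, hTa⟩ := preimage hb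
    obtain ⟨a', ha', hTa'⟩ := preimage hb'
    obtain rfl := (hg.2.2 a j a' j' ha ha' (by rw [hTa, hTa', he])).2
    refine ⟨?_, rfl⟩
    rcases lt_trichotomy i i' with hii | rfl | hii
    · exact absurd he (hsort.lt_of_lt_row hpart hii hb').ne
    · rfl
    · exact absurd he (hsort.lt_of_lt_row hpart hii hb).ne'

theorem ColSortedOf.image_col_eq (hsort : ColSortedOf lam T S) (j : ℕ) :
    {p ∈ boxes lam | p.2 = j}.image (fun p => T p.1 p.2) =
      {p ∈ boxes lam | p.2 = j}.image (fun p => S p.1 p.2) := by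
  ext m
  rw [mem_image_col, mem_image_col]
  exact hsort.1 j m

theorem ColSortedOf.sum_boxes_eq {M : Type*} [AddCommMonoid M] (hgT : GoodFilling lam T)
    (hgS : GoodFilling lam S) (hsort : ColSortedOf lam T S) (F : ℕ → ℕ → M) :
    ∑ p ∈ boxes lam, F p.2 (T p.1 p.2) = ∑ p ∈ boxes lam, F p.2 (S p.1 p.2) :=
  sum_comp_eq_of_image_fiber_eq hgT.injOn hgS.injOn hsort.image_col_eq F

theorem ColSortedOf.card_filter_eq (hgT : GoodFilling lam T) (hgS : GoodFilling lam S)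
    (hsort : ColSortedOf lam T S) (P : ℕ → ℕ → Prop) [∀ c x, Decidable (P c x)] :
    #{p ∈ boxes lam | P p.2 (T p.1 p.2)} = #{p ∈ boxes lam | P p.2 (S p.1 p.2)} := by
  simpa only [card_filter] using hsort.sum_boxes_eq hgT hgS fun c x => if P c x then 1 else 0

/-- The column-sorting lemma. If the sorted entry `S t j` exceeded `b = h (S t (j+1))`, column `j`
would hold at most `t` entries `≤ b`; but the left neighbours (in `T`) of the `t + 1` smallest
entries of column `j + 1` are all `≤ b`. -/
theorem ColSortedOf.hStrictF (hpart : IsPartitionL lam) (hmono : Monotone h)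
    (hg : GoodFilling lam T) (hhs : HStrictF lam h T) (hsort : ColSortedOf lam T S) :
    HStrictF lam h S := by
  intro t j hb
  by_contra! hlt
  have hgS := hsort.goodFilling hpart hg
  have top : t + 1 ≤ #{p ∈ boxes lam | p.2 = j + 1 ∧ S p.1 p.2 ≤ S t (j + 1)} := by
    simpa using card_le_card_of_injOn (s := range (t + 1)) (fun i => (i, j + 1))
      (fun i hi => by
        have hi : i ≤ t := Nat.lt_succ_iff.1 (mem_range.1 hi)
        exact mem_filter.2 ⟨mem_boxes.2 (hb.of_le_row hpart hi), rfl,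
          hsort.le_of_le_row hpart hi hb⟩)
      (fun _ _ _ _ he => (Prod.mk.inj he).1)
  have bottom : #{p ∈ boxes lam | p.2 = j ∧ S p.1 p.2 ≤ h (S t (j + 1))} ≤ t := by
    simpa using card_le_card_of_injOn (t := range t) Prod.fst
      (fun p hp => by
        obtain ⟨hbox, rfl, hle⟩ := mem_filter.1 hp
        by_contra! hpt
        exact absurd (hsort.le_of_le_row hpart (by simpa using hpt) (mem_boxes.1 hbox)) (by omega))
      (fun p hp q hq he => Prod.ext he (((mem_filter.1 hp).2.1).trans (mem_filter.1 hq).2.1.symm))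
  have shift : #{p ∈ boxes lam | p.2 = j + 1 ∧ T p.1 p.2 ≤ S t (j + 1)} ≤
      #{p ∈ boxes lam | p.2 = j ∧ T p.1 p.2 ≤ h (S t (j + 1))} := by
    refine card_le_card_of_injOn (fun p => (p.1, j)) (fun p hp => ?_)
      (fun p hp q hq he => Prod.ext (Prod.mk.inj he).1
        (((mem_filter.1 hp).2.1).trans (mem_filter.1 hq).2.1.symm))
    obtain ⟨hp, hpj, hle⟩ := mem_filter.1 hp
    rw [mem_boxes, hpj] at hp
    rw [hpj] at hle
    exact mem_filter.2 ⟨mem_boxes.2 hp.of_succ_col, rfl, (hhs _ _ hp).trans (hmono hle)⟩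
  rw [hsort.card_filter_eq hg hgS (fun c x => c = j + 1 ∧ x ≤ S t (j + 1)),
    hsort.card_filter_eq hg hgS (fun c x => c = j ∧ x ≤ h (S t (j + 1)))] at shift
  omega

def colSort (lam : List ℕ) (T : ℕ → ℕ → ℕ) (i j : ℕ) : ℕ :=
  (({p ∈ boxes lam | p.2 = j}.image fun p => T p.1 p.2).sort (· ≤ ·)).getD i 0

theorem colSortedOf_colSort (hpart : IsPartitionL lam) (hg : GoodFilling lam T) :
    ColSortedOf lam T (colSort lam T) := by
  set μ := YoungDiagram.ofRowLens lam hpart.sortedGE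
  have hlen (j : ℕ) :
      (({p ∈ boxes lam | p.2 = j}.image fun p => T p.1 p.2).sort (· ≤ ·)).length = μ.colLen j := by
    rw [length_sort, card_image_of_injOn (hg.injOn.mono (coe_subset.2 (filter_subset _ _))),
      μ.colLen_eq_card]
    rfl
  refine ⟨fun j m => ?_, fun i j _ hb => ?_⟩
  · rw [← mem_image_col, ← mem_sort (· ≤ ·), List.mem_iff_getElem]
    simp only [hlen, isBox_iff_lt_colLen hpart, colSort]
    exact ⟨fun ⟨i, hi, he⟩ => ⟨i, hi, by rwa [List.getD_eq_getElem]⟩,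
      fun ⟨i, hi, he⟩ => ⟨i, hi, by rwa [List.getD_eq_getElem] at he⟩⟩
  · have hi := (isBox_iff_lt_colLen hpart).1 hb
    rw [← hlen j] at hi
    rw [colSort, colSort, List.getD_eq_getElem _ _ (by omega), List.getD_eq_getElem _ _ hi]
    exact (sortedLT_sort _).getElem_lt_getElem_iff.2 i.lt_succ_self

end ColumnSorting

section HessenbergInversions

variable {lam : List ℕ} {h : ℕ → ℕ} {T S : ℕ → ℕ → ℕ}

/-- The largest entry that can form a Hessenberg inversion with the box `p`; at the end of a row
the bound `lam.sum` is vacuous. -/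
def hessBound (lam : List ℕ) (h : ℕ → ℕ) (T : ℕ → ℕ → ℕ) (p : ℕ × ℕ) : ℕ :=
  if IsBox lam p.1 (p.2 + 1) then h (T p.1 (p.2 + 1)) else lam.sum

theorem le_hessBound (hg : GoodFilling lam T) (hhs : HStrictF lam h T) {p : ℕ × ℕ}
    (hp : p ∈ boxes lam) : T p.1 p.2 ≤ hessBound lam h T p := by
  unfold hessBound
  split_ifs with hright
  exacts [hhs _ _ hright, (hg.1 _ _ (mem_boxes.1 hp)).2]

theorem ColSortedOf.sum_hessBound_eq {M : Type*} [AddCommMonoid M] (hgT : GoodFilling lam T)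
    (hgS : GoodFilling lam S) (hsort : ColSortedOf lam T S) (G : ℕ → ℕ → M) :
    ∑ p ∈ boxes lam, G p.2 (hessBound lam h T p) =
      ∑ p ∈ boxes lam, G p.2 (hessBound lam h S p) := by
  set s := {p ∈ boxes lam | IsBox lam p.1 (p.2 + 1)}
  have hinj {U : ℕ → ℕ → ℕ} (hU : GoodFilling lam U) :
      Set.InjOn (fun p : ℕ × ℕ => U p.1 (p.2 + 1)) s := fun p hp q hq he => by
    have := hU.injOn (mem_boxes (p := (p.1, p.2 + 1)) |>.2 (mem_filter.1 hp).2)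
      (mem_boxes (p := (q.1, q.2 + 1)) |>.2 (mem_filter.1 hq).2) he
    simp only [Prod.mk.injEq, add_left_inj] at this
    exact Prod.ext this.1 this.2
  have hmem {U : ℕ → ℕ → ℕ} {j m : ℕ} :
      m ∈ {p ∈ s | p.2 = j}.image (fun p : ℕ × ℕ => U p.1 (p.2 + 1)) ↔
        ∃ i, IsBox lam i (j + 1) ∧ U i (j + 1) = m := by
    simp only [s, mem_image, mem_filter, mem_boxes]
    exact ⟨fun ⟨p, ⟨⟨_, hb⟩, hj⟩, hm⟩ => ⟨p.1, hj ▸ hb, hj ▸ hm⟩,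
      fun ⟨i, hb, hm⟩ => ⟨(i, j), ⟨⟨hb.of_succ_col, hb⟩, rfl⟩, hm⟩⟩
  have right : ∑ p ∈ s, G p.2 (hessBound lam h T p) = ∑ p ∈ s, G p.2 (hessBound lam h S p) := by
    have bound {U : ℕ → ℕ → ℕ} :
        ∀ p ∈ s, G p.2 (hessBound lam h U p) = G p.2 (h (U p.1 (p.2 + 1))) :=
      fun p hp => by rw [hessBound, if_pos (mem_filter.1 hp).2]
    rw [sum_congr rfl bound, sum_congr rfl bound]
    exact sum_comp_eq_of_image_fiber_eq (hinj hgT) (hinj hgS)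
      (fun j => by ext m; rw [hmem, hmem]; exact hsort.1 (j + 1) m) fun j x => G j (h x)
  have rowEnd : ∑ p ∈ boxes lam with ¬IsBox lam p.1 (p.2 + 1), G p.2 (hessBound lam h T p) =
      ∑ p ∈ boxes lam with ¬IsBox lam p.1 (p.2 + 1), G p.2 (hessBound lam h S p) :=
    sum_congr rfl fun p hp => by
      rw [hessBound, hessBound, if_neg (mem_filter.1 hp).2, if_neg (mem_filter.1 hp).2]
  rw [← sum_filter_add_sum_filter_not (boxes lam) (fun p => IsBox lam p.1 (p.2 + 1)), right,
    rowEnd, sum_filter_add_sum_filter_not]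

def boundedPairs (lam : List ℕ) (h : ℕ → ℕ) (T : ℕ → ℕ → ℕ) : Finset ((ℕ × ℕ) × (ℕ × ℕ)) :=
  {q ∈ boxes lam ×ˢ boxes lam | q.1.2 ≤ q.2.2 ∧ T q.2.1 q.2.2 < T q.1.1 q.1.2 ∧
    T q.1.1 q.1.2 ≤ hessBound lam h T q.2}

def invPairs (lam : List ℕ) (h : ℕ → ℕ) (T : ℕ → ℕ → ℕ) : Finset ((ℕ × ℕ) × (ℕ × ℕ)) :=
  {q ∈ boundedPairs lam h T | q.1.2 < q.2.2 ∨ q.2.1 < q.1.1}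

theorem hessInvCount_eq_card_invPairs (hg : GoodFilling lam T) :
    hessInvCount lam h T = #(invPairs lam h T) := by
  have hinj : Set.InjOn (fun q : (ℕ × ℕ) × (ℕ × ℕ) => (T q.1.1 q.1.2, T q.2.1 q.2.2))
      (invPairs lam h T) := fun q hq q' hq' he => by
    simp only [invPairs, boundedPairs, mem_coe, mem_filter, mem_product] at hq hq'
    simp only [Prod.mk.injEq] at he
    exact Prod.ext (hg.injOn hq.1.1.1 hq'.1.1.1 he.1) (hg.injOn hq.1.1.2 hq'.1.1.2 he.2)
  rw [hessInvCount, ← card_image_of_injOn hinj]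
  refine congrArg card ?_
  ext ⟨k, l⟩
  simp only [invPairs, boundedPairs, mem_filter, mem_product, mem_range, mem_image]
  simp only [HessInvF, hessBound, mem_boxes, Prod.exists, Prod.mk.injEq]
  constructor
  · rintro ⟨⟨hk, -⟩, hlk, ik, jk, il, jl, hK, hL, rfl, rfl, hpos, hcap⟩
    refine ⟨ik, jk, il, jl, ⟨⟨⟨hK, hL⟩, by omega, hlk, ?_⟩, by omega⟩, rfl, rfl⟩
    split_ifs with hright
    exacts [hcap hright, by omega]
  · rintro ⟨ik, jk, il, jl, ⟨⟨⟨hK, hL⟩, hcol, hlk, hcap⟩, hpos⟩, rfl, rfl⟩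
    have := (hg.1 _ _ hK).2
    have := (hg.1 _ _ hL).2
    refine ⟨⟨by omega, by omega⟩, hlk, ik, jk, il, jl, hK, hL, rfl, rfl, by omega,
      fun hright => ?_⟩
    rwa [if_pos hright] at hcap

def leftCount (lam : List ℕ) (T : ℕ → ℕ → ℕ) (j x : ℕ) : ℕ :=
  #{p ∈ boxes lam | p.2 ≤ j ∧ T p.1 p.2 ≤ x}

theorem card_boundedPairs_add_sum_leftCount (hg : GoodFilling lam T) (hhs : HStrictF lam h T) :
    #(boundedPairs lam h T) + ∑ p ∈ boxes lam, leftCount lam T p.2 (T p.1 p.2) =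
      ∑ p ∈ boxes lam, leftCount lam T p.2 (hessBound lam h T p) := by
  have fiber (L : ℕ × ℕ) (hL : L ∈ boxes lam) :
      #{K ∈ boxes lam | K.2 ≤ L.2 ∧ T L.1 L.2 < T K.1 K.2 ∧ T K.1 K.2 ≤ hessBound lam h T L} +
        leftCount lam T L.2 (T L.1 L.2) = leftCount lam T L.2 (hessBound lam h T L) := by
    have := le_hessBound hg hhs hL
    rw [leftCount, leftCount, ← card_filter_add_card_filter_not (s := {K ∈ boxes lam |
      K.2 ≤ L.2 ∧ T K.1 K.2 ≤ hessBound lam h T L}) (fun K => T L.1 L.2 < T K.1 K.2),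
      filter_filter, filter_filter]
    congr 2 <;> exact filter_congr fun K _ => by omega
  rw [boundedPairs, card_filter, sum_product_right, ← sum_add_distrib]
  exact sum_congr rfl fun L hL => by rw [← card_filter, fiber L hL]

theorem ColSortedOf.card_boundedPairs_eq (hpart : IsPartitionL lam) (hmono : Monotone h)
    (hg : GoodFilling lam T) (hhs : HStrictF lam h T) (hsort : ColSortedOf lam T S) :
    #(boundedPairs lam h T) = #(boundedPairs lam h S) := by
  have hgS := hsort.goodFilling hpart hg
  have hleft (j x : ℕ) : leftCount lam T j x = leftCount lam S j x :=
    hsort.card_filter_eq hg hgS fun c y => c ≤ j ∧ y ≤ x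
  have entries : ∑ p ∈ boxes lam, leftCount lam T p.2 (T p.1 p.2) =
      ∑ p ∈ boxes lam, leftCount lam S p.2 (S p.1 p.2) := by
    simp only [hleft]
    exact hsort.sum_boxes_eq hg hgS (leftCount lam S)
  have bounds : ∑ p ∈ boxes lam, leftCount lam T p.2 (hessBound lam h T p) =
      ∑ p ∈ boxes lam, leftCount lam S p.2 (hessBound lam h S p) := by
    simp only [hleft]
    exact hsort.sum_hessBound_eq hg hgS (leftCount lam S)
  have := card_boundedPairs_add_sum_leftCount hg hhs
  have := card_boundedPairs_add_sum_leftCount hgS (hsort.hStrictF hpart hmono hg hhs)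
  omega

theorem ColSortedOf.invPairs_eq_boundedPairs (hpart : IsPartitionL lam)
    (hsort : ColSortedOf lam T S) : invPairs lam h S = boundedPairs lam h S := by
  refine filter_true_of_mem fun q hq => ?_
  obtain ⟨hbox, hcol, hlt, -⟩ := mem_filter.1 hq
  by_contra! habove
  obtain ⟨⟨ik, jk⟩, ⟨il, jl⟩⟩ := q
  obtain rfl : jk = jl := by dsimp only at hcol habove; omega
  exact absurd (hsort.le_of_le_row hpart habove.2 (mem_boxes.1 (mem_product.1 hbox).2))
    (by simpa using hlt)

/-- At the rightmost column where row `i + 1` is smaller than row `i`, the bound of the lower box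
is at least the upper entry: otherwise `h`-strictness of row `i` and monotonicity of `h` would
move the descent one column to the right. -/
theorem invPairs_ssubset_boundedPairs (hpart : IsPartitionL lam) (hmono : Monotone h)
    (hg : GoodFilling lam T) (hhs : HStrictF lam h T)
    (hdesc : ∃ i j, IsBox lam (i + 1) j ∧ T (i + 1) j < T i j) :
    invPairs lam h T ⊂ boundedPairs lam h T := by
  obtain ⟨i, j, hb, hlt⟩ := hdesc
  set P := fun c => IsBox lam (i + 1) c ∧ T (i + 1) c < T i c
  set c := Nat.findGreatest P (lam.getD (i + 1) 0)
  obtain ⟨hbc, hltc⟩ : P c := Nat.findGreatest_spec hb.2.le ⟨hb, hlt⟩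
  have hcap : T i c ≤ hessBound lam h T (i + 1, c) := by
    dsimp only [hessBound]
    split_ifs with hright
    · by_contra! hgt
      have hrow := hhs i c (hright.of_le_row hpart i.le_succ)
      have : T (i + 1) (c + 1) < T i (c + 1) := by
        by_contra! hle
        exact absurd (hmono hle) (by omega)
      exact Nat.findGreatest_is_greatest (Nat.lt_succ_self c) hright.2.le ⟨hright, this⟩
    · exact (hg.1 _ _ (hbc.of_le_row hpart i.le_succ)).2
  refine (filter_ssubset).2 ⟨((i, c), (i + 1, c)), ?_, by simp⟩
  exact mem_filter.2 ⟨mem_product.2 ⟨mem_boxes.2 (hbc.of_le_row hpart i.le_succ),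
    mem_boxes.2 hbc⟩, le_rfl, hltc, hcap⟩

theorem ColSortedOf.hessInvCount_lt (hpart : IsPartitionL lam) (hmono : Monotone h)
    (hg : GoodFilling lam T) (hhs : HStrictF lam h T) (hsort : ColSortedOf lam T S)
    (hdesc : ∃ i j, IsBox lam (i + 1) j ∧ T (i + 1) j < T i j) :
    hessInvCount lam h T < hessInvCount lam h S := calc
  hessInvCount lam h T = #(invPairs lam h T) := hessInvCount_eq_card_invPairs hg
  _ < #(boundedPairs lam h T) :=
    card_lt_card (invPairs_ssubset_boundedPairs hpart hmono hg hhs hdesc)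
  _ = #(boundedPairs lam h S) := hsort.card_boundedPairs_eq hpart hmono hg hhs
  _ = #(invPairs lam h S) := by rw [hsort.invPairs_eq_boundedPairs hpart]
  _ = hessInvCount lam h S := (hessInvCount_eq_card_invPairs (hsort.goodFilling hpart hg)).symm

end HessenbergInversions

theorem stmt19_general (lam : List ℕ) (hpart : IsPartitionL lam) (h : ℕ → ℕ)
    (hmono : ∀ a b, a ≤ b → h a ≤ h b)
    (hlt : ∀ i, 1 ≤ i → i ≤ lam.sum → h i < i)
    (T S : ℕ → ℕ → ℕ) (hgoodT : GoodFilling lam T)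
    (hhsT : HStrictF lam h T)
    (hsort : ColSortedOf lam T S)
    (hnotstd : ∃ i j, IsBox lam (i+1) j ∧ T (i+1) j < T i j) :
    hessInvCount lam h T < hessInvCount lam h S ∧
    (∀ T', GoodFilling lam T' → RowStrictF lam T' → HStrictF lam h T' →
      (∀ T'', GoodFilling lam T'' → RowStrictF lam T'' → HStrictF lam h T'' →
        hessInvCount lam h T'' ≤ hessInvCount lam h T') →
      ∀ i j, IsBox lam i j → IsBox lam (i+1) j → T' i j < T' (i+1) j) := by
  have hmono : Monotone h := fun a b => hmono a b
  refine ⟨hsort.hessInvCount_lt hpart hmono hgoodT hhsT hnotstd, ?_⟩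
  intro T' hg _ hhs hmax i j hb hb'
  by_contra! hle
  have hdesc : T' (i + 1) j < T' i j :=
    hle.lt_of_ne fun he => absurd (hg.2.2 _ _ _ _ hb' hb he).1 i.succ_ne_self
  have hsort' := colSortedOf_colSort hpart hg
  have hgS := hsort'.goodFilling hpart hg
  have hhsS := hsort'.hStrictF hpart hmono hg hhs
  exact (hsort'.hessInvCount_lt hpart hmono hg hhs ⟨i, j, hb', hdesc⟩).not_ge
    (hmax _ hgS (hhsS.rowStrictF hgS hlt) hhsS)

/-- if `R` is `h`-strict row-strict but not standard, then `R` has strictly fewer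
Hessenberg inversions than `std(R)`; in particular any `h`-strict tableau with the maximal
number of Hessenberg inversions is standard (columns increase top to bottom). -/
theorem stmt19 (lam : List ℕ) (hpart : IsPartitionL lam) (h : ℕ → ℕ)
    (hmono : ∀ a b, a ≤ b → h a ≤ h b)
    (hlt : ∀ i, 1 ≤ i → i ≤ lam.sum → h i < i)
    (T S : ℕ → ℕ → ℕ) (hgoodT : GoodFilling lam T)
    (hrsT : RowStrictF lam T) (hhsT : HStrictF lam h T)
    (hsort : ColSortedOf lam T S)
    (hnotstd : ∃ i j, IsBox lam (i+1) j ∧ T (i+1) j < T i j) :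
    hessInvCount lam h T < hessInvCount lam h S ∧
    (∀ T', GoodFilling lam T' → RowStrictF lam T' → HStrictF lam h T' →
      (∀ T'', GoodFilling lam T'' → RowStrictF lam T'' → HStrictF lam h T'' →
        hessInvCount lam h T'' ≤ hessInvCount lam h T') →
      ∀ i j, IsBox lam i j → IsBox lam (i+1) j → T' i j < T' (i+1) j) :=
  stmt19_general lam hpart h hmono hlt T S hgoodT hhsT hsort hnotstd
end
end
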